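/- For every ideal I ⊆ R = ℂ[x_1,…,x_N] and every nonzero g ∈ R, the dual space of the quotient (colon) ideal satisfies D_0[I : ⟨g⟩] = g·D_0[I] := {g·q : q ∈ D_0[I]}, where I : ⟨g⟩ = {f ∈ R : gf ∈ I}. -/

import Mathlib

open MvPolynomial

noncomputable section

/-- The polynomial ring `R = ℂ[x_1,…,x_N]`, with variables indexed by `Fin N`. -/
abbrev PolyR (N : ℕ) := MvPolynomial (Fin N) ℂ

/-- A dual functional `q = Σ_α c_α ∂^α` is encoded by its coefficient vector, i.e.
by an element of `MvPolynomial (Fin N) ℂ` (which is exactly the space of finitely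
supported functions `ℕ^N →₀ ℂ`).  Its application to a polynomial `f` is
`q(f) = Σ_α c_α · (coefficient of x^α in f)`. -/
def dapply {N : ℕ} (q f : PolyR N) : ℂ := ∑ α ∈ f.support, q.coeff α * f.coeff α

/-- The Macaulay dual space `D_0[I]` of an ideal `I`, as a `ℂ`-subspace of `D_0`. -/
def dualSpace {N : ℕ} (I : Ideal (PolyR N)) : Submodule ℂ (PolyR N) where
  carrier := {q | ∀ f ∈ I, dapply q f = 0}
  zero_mem' := by intro f _; simp [dapply]
  add_mem' := by
    intro a b ha hb f hf
    have h : dapply (a + b) f = dapply a f + dapply b f := by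
      simp [dapply, MvPolynomial.coeff_add, add_mul, Finset.sum_add_distrib]
    rw [h, ha f hf, hb f hf, add_zero]
  smul_mem' := by
    intro c q hq f hf
    have h : dapply (c • q) f = c * dapply q f := by
      simp [dapply, MvPolynomial.coeff_smul, Finset.mul_sum, mul_assoc]
    rw [h, hq f hf, mul_zero]

/-- The subspace of dual functionals all of whose exponents satisfy `P`. -/
def expSupported {N : ℕ} (P : (Fin N →₀ ℕ) → Prop) : Submodule ℂ (PolyR N) where
  carrier := {q | ∀ α ∈ q.support, P α}
  zero_mem' := by simp
  add_mem' := by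
    intro a b ha hb α hα
    rcases Finset.mem_union.mp (MvPolynomial.support_add hα) with h | h
    · exact ha α h
    · exact hb α h
  smul_mem' := by
    intro c q hq α hα
    exact hq α (MvPolynomial.support_smul hα)

/-- The truncated dual space `D_0^k[I]`: functionals in `D_0[I]` of order at most `k`
(in particular `0` belongs to it). -/
def truncDual {N : ℕ} (I : Ideal (PolyR N)) (k : ℕ) : Submodule ℂ (PolyR N) :=
  dualSpace I ⊓ expSupported (fun α => ∑ i, α i ≤ k)

/-- The eliminating truncated dual space `E_0^d[I, A]`, where the set of variables `A`
is given by a finite set of indices: functionals in `D_0[I]` with `ord_A ≤ d`. -/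
def elimDual {N : ℕ} (I : Ideal (PolyR N)) (A : Finset (Fin N)) (d : ℕ) :
    Submodule ℂ (PolyR N) :=
  dualSpace I ⊓ expSupported (fun α => ∑ i ∈ A, α i ≤ d)

open scoped Classical in
/-- The action `g · q` of the polynomial ring on dual functionals, determined by
`(g·q)(f) = q(g·f)`; concretely `g · ∂^α = Σ_{γ ≤ α} g_γ ∂^{α-γ}`. -/
def dmul {N : ℕ} (g q : PolyR N) : PolyR N :=
  ∑ γ ∈ g.support, ∑ α ∈ q.support,
    if γ ≤ α then (MvPolynomial.monomial (α - γ)) (g.coeff γ * q.coeff α) else 0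

/-- The maximal ideal `m = ⟨x_1,…,x_N⟩` of the origin. -/
def mIdeal (N : ℕ) : Ideal (PolyR N) := Ideal.span (Set.range MvPolynomial.X)

/-- The multiplicative set of polynomials not vanishing at the origin. -/
def atOrigin (N : ℕ) : Submonoid (PolyR N) where
  carrier := {g | MvPolynomial.constantCoeff g ≠ 0}
  one_mem' := by simp
  mul_mem' := by
    intro a b ha hb
    simp only [Set.mem_setOf_eq, map_mul]
    exact mul_ne_zero ha hb

/-- The local ring `R_0` of the origin: the localization of `R` at the maximal ideal
of the origin. -/
abbrev LocR (N : ℕ) := Localization (atOrigin N)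

/-- The extension `I·R_0` of an ideal `I ⊆ R` to the local ring of the origin. -/
def extIdeal {N : ℕ} (I : Ideal (PolyR N)) : Ideal (LocR N) :=
  Ideal.map (algebraMap (PolyR N) (LocR N)) I

/-- The contraction `I·R_0 ∩ R` of the extension of `I` back to `R`. -/
def contExt {N : ℕ} (I : Ideal (PolyR N)) : Ideal (PolyR N) :=
  Ideal.comap (algebraMap (PolyR N) (LocR N)) (extIdeal I)

/-- The local Hilbert function
`H_I(k) = dim_ℂ R/(I + m^{k+1}) − dim_ℂ R/(I + m^k)`
(note that for `k = 0` the subtrahend vanishes since `m^0 = R`). -/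
def hilb {N : ℕ} (I : Ideal (PolyR N)) (k : ℕ) : ℕ :=
  Module.finrank ℂ (PolyR N ⧸ (I + mIdeal N ^ (k + 1)))
    - Module.finrank ℂ (PolyR N ⧸ (I + mIdeal N ^ k))

/-!
A dual element `q'` of order `d` that kills `I : ⟨g⟩` also kills `(I : ⟨g⟩) + m^(d+1)`. By Artin–Rees
for `I + ⟨g⟩` there is `e` with `(I + mᵉ) : ⟨g⟩ ⊆ (I : ⟨g⟩) + m^(d+1)`, so `q'` vanishes on the
kernel of `f ↦ g f mod I + mᵉ` and factors as `q' = ψ (g ·)` for a functional `ψ` vanishing on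
`I + mᵉ`. Vanishing on `mᵉ`, `ψ` is given by a dual element `q`, which then lies in `D_0[I]` and
satisfies `g · q = q'`. The other inclusion is `(g · q)(f) = q(g f)`.
-/

theorem Ideal.exists_colon_sup_pow_le {R : Type*} [CommRing R] [IsNoetherianRing R]
    (I m : Ideal R) (g : R) (d : ℕ) :
    ∃ e, (I ⊔ m ^ e).colon (Ideal.span {g}) ≤ I.colon (Ideal.span {g}) ⊔ m ^ d := by
  obtain ⟨k, hk⟩ := Ideal.exists_pow_inf_eq_pow_smul m (I ⊔ Ideal.span {g})
  simp only [Ideal.smul_eq_mul, Ideal.mul_top] at hk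
  refine ⟨d + k, fun f hf => ?_⟩
  rw [Submodule.mem_colon_span_singleton, smul_eq_mul] at hf
  obtain ⟨a, ha, h, hh, hsum⟩ := Submodule.mem_sup.mp hf
  have hh' : h ∈ m ^ d * I ⊔ m ^ d * Ideal.span {g} := by
    have hmem : h ∈ m ^ (d + k) ⊓ (I ⊔ Ideal.span {g}) := by
      refine ⟨hh, ?_⟩
      rw [show h = f * g - a by rw [← hsum]; ring]
      exact sub_mem (Ideal.mem_sup_right (Ideal.mul_mem_left _ f (Ideal.mem_span_singleton_self g)))
        (Ideal.mem_sup_left ha)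
    rw [hk (d + k) (by omega), add_tsub_cancel_right] at hmem
    rw [← Ideal.mul_sup]
    exact Ideal.mul_mono_right inf_le_right hmem
  obtain ⟨b, hb, c, hc, rfl⟩ := Submodule.mem_sup.mp hh'
  rw [mul_comm] at hc
  obtain ⟨z, hz, rfl⟩ := Ideal.mem_span_singleton_mul.mp hc
  have hfz : f - z ∈ I.colon (Ideal.span {g}) := by
    rw [Submodule.mem_colon_span_singleton, smul_eq_mul,
      show (f - z) * g = a + b by linear_combination -hsum]
    exact I.add_mem ha (Ideal.mul_le_right hb)
  rw [← sub_add_cancel f z]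
  exact Ideal.add_mem _ (Ideal.mem_sup_left hfz) (Ideal.mem_sup_right hz)

section MacaulayDual

variable {N : ℕ}

theorem mem_mIdeal_pow_iff {n : ℕ} {f : PolyR N} :
    f ∈ mIdeal N ^ n ↔ ∀ α ∈ f.support, n ≤ α.degree :=
  mem_pow_idealOfVars_iff n f

theorem dapply_eq_sum_of_support_subset {q f : PolyR N} {s : Finset (Fin N →₀ ℕ)}
    (h : f.support ⊆ s) : dapply q f = ∑ α ∈ s, q.coeff α * f.coeff α :=
  Finset.sum_subset h fun α _ hα => by rw [notMem_support_iff.mp hα, mul_zero]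

def dapplyₗ (q : PolyR N) : Module.Dual ℂ (PolyR N) where
  toFun := dapply q
  map_add' f₁ f₂ := by
    classical
    rw [dapply_eq_sum_of_support_subset support_add,
      dapply_eq_sum_of_support_subset (s := f₁.support ∪ f₂.support) Finset.subset_union_left,
      dapply_eq_sum_of_support_subset (s := f₁.support ∪ f₂.support) Finset.subset_union_right,
      ← Finset.sum_add_distrib]
    simp only [coeff_add, mul_add]
  map_smul' c f := by
    rw [dapply_eq_sum_of_support_subset support_smul, dapply, RingHom.id_apply, smul_eq_mul,
      Finset.mul_sum]
    exact Finset.sum_congr rfl fun α _ => by rw [coeff_smul, smul_eq_mul]; ring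

@[simp]
theorem dapplyₗ_apply (q f : PolyR N) : dapplyₗ q f = dapply q f :=
  rfl

theorem dapply_monomial (q : PolyR N) (α : Fin N →₀ ℕ) (c : ℂ) :
    dapply q (monomial α c) = q.coeff α * c := by
  classical
  rw [dapply_eq_sum_of_support_subset support_monomial_subset, Finset.sum_singleton,
    coeff_monomial, if_pos rfl]

theorem eq_of_forall_dapply_eq {p p' : PolyR N} (h : ∀ f, dapply p f = dapply p' f) :
    p = p' :=
  MvPolynomial.ext _ _ fun α => by simpa only [dapply_monomial, mul_one] using h (monomial α 1)

theorem dapply_eq_zero_of_mem_mIdeal_pow {q f : PolyR N} {n : ℕ}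
    (hq : ∀ α ∈ q.support, α.degree < n) (hf : f ∈ mIdeal N ^ n) : dapply q f = 0 :=
  Finset.sum_eq_zero fun α hα => by
    have hqα : q.coeff α = 0 :=
      notMem_support_iff.mp fun h => (hq α h).not_ge (mem_mIdeal_pow_iff.mp hf α hα)
    rw [hqα, zero_mul]

theorem exists_dapply_eq_of_eq_zero_on_mIdeal_pow {n : ℕ} (φ : Module.Dual ℂ (PolyR N))
    (hφ : ∀ f ∈ mIdeal N ^ n, φ f = 0) : ∃ q : PolyR N, ∀ f, dapply q f = φ f := by
  classical
  set S := (Finsupp.finite_of_degree_lt (σ := Fin N) n).toFinset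
  refine ⟨∑ α ∈ S, monomial α (φ (monomial α 1)), fun f => ?_⟩
  rw [← dapplyₗ_apply]
  congr 1
  refine (basisMonomials (Fin N) ℂ).ext fun β => ?_
  rw [coe_basisMonomials, dapplyₗ_apply, dapply_monomial, mul_one, coeff_sum]
  simp only [coeff_monomial, Finset.sum_ite_eq', S, Set.Finite.mem_toFinset, Set.mem_ofPred_eq]
  split_ifs with hβ
  · rfl
  · exact (hφ _ ((monomial_mem_pow_idealOfVars_iff n β one_ne_zero).mpr (not_lt.mp hβ))).symm

theorem coeff_dmul (g q : PolyR N) (β : Fin N →₀ ℕ) :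
    (dmul g q).coeff β = ∑ γ ∈ g.support, g.coeff γ * q.coeff (β + γ) := by
  classical
  simp only [dmul, coeff_sum]
  refine Finset.sum_congr rfl fun γ _ => ?_
  have hexp : ∀ α, (γ ≤ α ∧ α - γ = β) ↔ β + γ = α := fun α =>
    ⟨fun ⟨h, e⟩ => e ▸ tsub_add_cancel_of_le h, fun e => e ▸ ⟨le_add_self, add_tsub_cancel_right β γ⟩⟩
  simp only [apply_ite (coeff β), coeff_monomial, coeff_zero, ← ite_and, hexp, Finset.sum_ite_eq,
    mem_support_iff, ite_not]
  split_ifs with h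
  · rw [h, mul_zero]
  · rfl

theorem dapply_dmul (g q f : PolyR N) : dapply (dmul g q) f = dapply q (g * f) := by
  suffices dapplyₗ (dmul g q) = (dapplyₗ q).comp (LinearMap.mulLeft ℂ g) from
    LinearMap.congr_fun this f
  refine (basisMonomials (Fin N) ℂ).ext fun β => ?_
  rw [coe_basisMonomials, LinearMap.comp_apply, LinearMap.mulLeft_apply, dapplyₗ_apply,
    dapply_monomial, mul_one, coeff_dmul]
  conv_rhs => rw [g.as_sum, Finset.sum_mul, map_sum]
  refine Finset.sum_congr rfl fun γ _ => ?_
  rw [monomial_mul, mul_one, dapplyₗ_apply, dapply_monomial, add_comm, mul_comm]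

theorem dmul_mem_dualSpace_colon {I : Ideal (PolyR N)} {q : PolyR N} (hq : q ∈ dualSpace I)
    (g : PolyR N) : dmul g q ∈ dualSpace (I.colon (Ideal.span {g})) := fun f hf => by
  rw [dapply_dmul]
  exact hq _ (mul_comm f g ▸ Submodule.mem_colon_span_singleton.mp hf)

theorem exists_dual_mul_eq_dapply_of_mem_dualSpace_colon {I : Ideal (PolyR N)} {g q' : PolyR N}
    (hq' : q' ∈ dualSpace (I.colon (Ideal.span {g}))) :
    ∃ e, ∃ φ : Module.Dual ℂ (PolyR N),
      (∀ f ∈ I ⊔ mIdeal N ^ e, φ f = 0) ∧ ∀ f, φ (g * f) = dapply q' f := by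
  obtain ⟨e, he⟩ :=
    Ideal.exists_colon_sup_pow_le I (mIdeal N) g (q'.support.sup Finsupp.degree + 1)
  set J := (I ⊔ mIdeal N ^ e).restrictScalars ℂ
  set L := J.mkQ ∘ₗ LinearMap.mulLeft ℂ g
  have hker : LinearMap.ker L ≤ LinearMap.ker (dapplyₗ q') := by
    intro f hf
    have hgf : g * f ∈ I ⊔ mIdeal N ^ e := (Submodule.Quotient.mk_eq_zero J).mp hf
    obtain ⟨a, ha, b, hb, rfl⟩ := Submodule.mem_sup.mp
      (he (Submodule.mem_colon_span_singleton.mpr (mul_comm g f ▸ hgf)))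
    have hqb : dapply q' b = 0 := dapply_eq_zero_of_mem_mIdeal_pow
      (fun α hα => Nat.lt_succ_of_le (Finset.le_sup hα)) hb
    simp only [LinearMap.mem_ker, map_add, dapplyₗ_apply, hq' a ha, hqb, add_zero]
  obtain ⟨ψ, hψ⟩ : dapplyₗ q' ∈ LinearMap.range L.dualMap := by
    rw [LinearMap.range_dualMap_eq_dualAnnihilator_ker, Submodule.mem_dualAnnihilator]
    exact fun f hf => hker hf
  refine ⟨e, ψ ∘ₗ J.mkQ, fun f hf => ?_, LinearMap.congr_fun hψ⟩
  rw [LinearMap.comp_apply, Submodule.mkQ_apply, (Submodule.Quotient.mk_eq_zero J).mpr hf, map_zero]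

theorem exists_dmul_eq_of_mem_dualSpace_colon {I : Ideal (PolyR N)} {g q' : PolyR N}
    (hq' : q' ∈ dualSpace (I.colon (Ideal.span {g}))) : ∃ q ∈ dualSpace I, dmul g q = q' := by
  obtain ⟨e, φ, hφ, hφg⟩ := exists_dual_mul_eq_dapply_of_mem_dualSpace_colon hq'
  obtain ⟨q, hq⟩ := exists_dapply_eq_of_eq_zero_on_mIdeal_pow φ fun f hf => hφ f (Ideal.mem_sup_right hf)
  refine ⟨q, fun f hf => (hq f).trans (hφ f (Ideal.mem_sup_left hf)), ?_⟩
  exact eq_of_forall_dapply_eq fun f => by rw [dapply_dmul, hq, hφg]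

end MacaulayDual

theorem statement10_general {N : ℕ} (I : Ideal (PolyR N)) (g : PolyR N) :
    (dualSpace (Submodule.colon I (Ideal.span {g})) : Set (PolyR N))
      = (fun q : PolyR N => dmul g q) '' (dualSpace I : Set (PolyR N)) := by
  ext q'
  constructor
  · exact exists_dmul_eq_of_mem_dualSpace_colon
  · rintro ⟨q, hq, rfl⟩
    exact dmul_mem_dualSpace_colon hq g

/-- For every ideal `I ⊆ R` and every nonzero `g ∈ R`,
`D_0[I : ⟨g⟩] = g · D_0[I]`. -/
theorem statement10 {N : ℕ} (hN : 1 ≤ N) (I : Ideal (PolyR N)) (g : PolyR N)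
    (hg : g ≠ 0) :
    (dualSpace (Submodule.colon I (Ideal.span {g})) : Set (PolyR N))
      = (fun q : PolyR N => dmul g q) '' (dualSpace I : Set (PolyR N)) :=
  statement10_general I g
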